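/- Let Φ and h be as in the canonical construction with d = 1 + rλ + sλ′, let Υ be a clause minimum prime pure Horn CNF representation of h, and define the labelings f_j from Υ as in the construction. Then for every index j ∈ [t], the labeling f_j is a tight total-cover of the refined Label Cover instance L of minimum cost, i.e., κ(f_j) = κ(L). -/

import Mathlib

open Finset

/-- A clause, given by its (fin)sets of positive and negative variables. -/
structure Clause (V : Type*) where
  pos : Finset V
  neg : Finset V
deriving DecidableEq

namespace Clause

variable {V : Type*}

/-- A genuine clause: no variable occurs both positively and negatively. -/
def IsClause (C : Clause V) : Prop := Disjoint C.pos C.neg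

/-- Evaluation of a clause (as a disjunction of literals) under an assignment. -/
def eval (C : Clause V) (a : V → Bool) : Prop :=
  (∃ v ∈ C.pos, a v = true) ∨ (∃ v ∈ C.neg, a v = false)

/-- A pure (definite) Horn clause: exactly one positive literal, its head. -/
def IsPureHorn (C : Clause V) : Prop := ∃ v, C.pos = {v}

end Clause

variable {V : Type*}

/-- Conjunction (as a predicate on assignments) of a set of clauses. -/
def evalSet (S : Set (Clause V)) (a : V → Bool) : Prop := ∀ C ∈ S, C.eval a

/-- Conjunction of the clauses of a CNF, i.e. of a finite set of clauses. -/
def evalCNF (Φ : Finset (Clause V)) (a : V → Bool) : Prop := ∀ C ∈ Φ, C.eval a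

/-- A CNF represents a Boolean function `h`. -/
def Represents (Φ : Finset (Clause V)) (h : (V → Bool) → Prop) : Prop :=
  ∀ a, evalCNF Φ a ↔ h a

/-- A pure Horn CNF: all clauses are pure Horn. -/
def IsPureHornCNF (Φ : Finset (Clause V)) : Prop :=
  ∀ C ∈ Φ, C.IsClause ∧ C.IsPureHorn

/-- The forward chaining closure of a set `Q` of variables with respect to the
pure Horn CNF `Φ`: the smallest set containing `Q` such that whenever `Φ` contains
a clause `S → v` with `S` inside the set, also `v` belongs to it. -/
def fcClosure (Φ : Finset (Clause V)) (Q : Set V) : Set V :=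
  ⋂₀ {T : Set V | Q ⊆ T ∧ ∀ C ∈ Φ, ∀ v : V, C.pos = {v} → ↑C.neg ⊆ T → v ∈ T}

/-- `C` is an implicate of `h`: every assignment falsifying `C` falsifies `h`. -/
def Implicate (h : (V → Bool) → Prop) (C : Clause V) : Prop :=
  ∀ a, ¬ C.eval a → ¬ h a

/-- `C` is a prime implicate of `h`: an implicate from which no literal can be
deleted while remaining an implicate. -/
def PrimeImplicate [DecidableEq V] (h : (V → Bool) → Prop) (C : Clause V) : Prop :=
  C.IsClause ∧ Implicate h C ∧
  (∀ v ∈ C.pos, ¬ Implicate h ⟨C.pos.erase v, C.neg⟩) ∧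
  (∀ v ∈ C.neg, ¬ Implicate h ⟨C.pos, C.neg.erase v⟩)

/-- `C₁` and `C₂` are resolvable on `v`: `v` occurs positively in `C₁`, negatively in
`C₂`, and no other variable occurs with opposite signs in them. -/
def Resolvable (C₁ C₂ : Clause V) (v : V) : Prop :=
  v ∈ C₁.pos ∧ v ∈ C₂.neg ∧
  ∀ w, w ≠ v → ¬(w ∈ C₁.pos ∧ w ∈ C₂.neg) ∧ ¬(w ∈ C₁.neg ∧ w ∈ C₂.pos)

/-- The resolvent `R(C₁,C₂) = (C₁ \ {v}) ∪ (C₂ \ {v̄})`. -/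
def resolventOf [DecidableEq V] (C₁ C₂ : Clause V) (v : V) : Clause V :=
  ⟨C₁.pos.erase v ∪ C₂.pos, C₁.neg ∪ C₂.neg.erase v⟩

/-- A set of clauses closed under resolution. -/
def ResClosed [DecidableEq V] (S : Set (Clause V)) : Prop :=
  ∀ C₁ ∈ S, ∀ C₂ ∈ S, ∀ v, Resolvable C₁ C₂ v → resolventOf C₁ C₂ v ∈ S

/-- The resolution closure of a set of clauses. -/
def resClosure [DecidableEq V] (S : Set (Clause V)) : Set (Clause V) :=
  ⋂₀ {T : Set (Clause V) | S ⊆ T ∧ ResClosed T}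

/-- `I(h)`: the resolution closure of the set of prime implicates of `h`. -/
def implSet [DecidableEq V] (h : (V → Bool) → Prop) : Set (Clause V) :=
  resClosure {C | PrimeImplicate h C}

/-- An exclusive set of clauses of `h`. -/
def ExclusiveSet [DecidableEq V] (h : (V → Bool) → Prop) (Xs : Set (Clause V)) : Prop :=
  Xs ⊆ implSet h ∧
  ∀ C₁ ∈ implSet h, ∀ C₂ ∈ implSet h, ∀ v, Resolvable C₁ C₂ v →
    resolventOf C₁ C₂ v ∈ Xs → C₁ ∈ Xs ∧ C₂ ∈ Xs

/-- The set of variables occurring in a CNF. -/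
def varsOf [DecidableEq V] (Φ : Finset (Clause V)) : Finset V :=
  Φ.biUnion fun C => C.pos ∪ C.neg


/-- A Label Cover instance: a bipartite graph with parts `X` and `Y` and edge set `E`,
label sets `A` (for `X`-vertices) and `B` (for `Y`-vertices), and a nonempty
constraint relation `cst e ⊆ A × B` for every edge `e ∈ E`. -/
structure LabelCover (X Y A B : Type*) where
  E : Finset (X × Y)
  cst : X × Y → Finset (A × B)
  cst_nonempty : ∀ e ∈ E, (cst e).Nonempty

namespace LabelCover

variable {X Y A B : Type*}

/-- A labeling `(f, g)` covers an edge `(x,y)` if for every label `b ∈ g y` there is a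
label `a ∈ f x` with `(a, b)` admissible for the edge. -/
def Covers (I : LabelCover X Y A B) (f : X → Finset A) (g : Y → Finset B)
    (e : X × Y) : Prop :=
  ∀ b ∈ g e.2, ∃ a ∈ f e.1, (a, b) ∈ I.cst e

/-- A total-cover: a labeling (assigning a nonempty label set to every `Y`-vertex)
covering every edge. -/
def IsTotalCover (I : LabelCover X Y A B) (f : X → Finset A) (g : Y → Finset B) : Prop :=
  (∀ y, (g y).Nonempty) ∧ ∀ e ∈ I.E, I.Covers f g e

/-- A total-cover is tight if every `Y`-vertex receives exactly one label. -/
def Tight (g : Y → Finset B) : Prop := ∀ y, (g y).card = 1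

end LabelCover

/-- The cost of a labeling: the average number of labels assigned to `X`-vertices. -/
def lcCost {X A : Type*} [Fintype X] (f : X → Finset A) : ℚ :=
  (∑ x, ((f x).card : ℚ)) / (Fintype.card X : ℚ)


/-- The labels of the refined Label Cover instance: `L ∪ L′`, where `L = ⋃_x L_x`
with `L_x = {x} × A` and `L′ = ⋃_y L′_y` with `L′_y = {y} × B`. -/
abbrev Lab (X Y A B : Type*) := (X × A) ⊕ (Y × B)

/-- The propositional variables of the canonical pure Horn CNF construction:
`u ℓ` for labels `ℓ ∈ L ∪ L′`, `e x y i` and `el x y ℓ′ i` for edges `(x,y)`,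
labels `ℓ′ ∈ L′_y` and indices `i ∈ [d]`, and `v j` for `j ∈ [t]`. -/
inductive PV (X Y A B : Type*) where
  | u : Lab X Y A B → PV X Y A B
  | e : X → Y → ℕ → PV X Y A B
  | el : X → Y → B → ℕ → PV X Y A B
  | v : ℕ → PV X Y A B
deriving DecidableEq

section Canonical

variable {X Y A B : Type*} [Fintype X] [Fintype Y] [Fintype A] [Fintype B]
  [DecidableEq X] [DecidableEq Y] [DecidableEq A] [DecidableEq B]

/-- The (open) neighborhood `N(y) = {z ∈ X : (z,y) ∈ E}`. -/
def Nbr (I : LabelCover X Y A B) (y : Y) : Finset X :=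
  Finset.univ.filter fun z => (z, y) ∈ I.E

/-- Clauses (a): `u(ℓ) ∧ u(ℓ′) → e(x,y,ℓ′,i)` for `(x,y) ∈ E`, `(ℓ,ℓ′) ∈ Π_{(x,y)}`,
`i ∈ [d]`. -/
def clA (I : LabelCover X Y A B) (d : ℕ) : Finset (Clause (PV X Y A B)) :=
  (I.E ×ˢ Finset.Icc 1 d).biUnion fun p =>
    (I.cst p.1).image fun ab =>
      ⟨{PV.el p.1.1 p.1.2 ab.2 p.2},
       {PV.u (Sum.inl (p.1.1, ab.1)), PV.u (Sum.inr (p.1.2, ab.2))}⟩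

/-- Clauses (b): `⋀_{z ∈ N(y)} e(z,y,ℓ′,i) → e(x,y,i)` for `(x,y) ∈ E`, `ℓ′ ∈ L′_y`,
`i ∈ [d]`. -/
def clB (I : LabelCover X Y A B) (d : ℕ) : Finset (Clause (PV X Y A B)) :=
  ((I.E ×ˢ (Finset.univ : Finset B)) ×ˢ Finset.Icc 1 d).image fun p =>
    ⟨{PV.e p.1.1.1 p.1.1.2 p.2},
     (Nbr I p.1.1.2).image fun z => PV.el z p.1.1.2 p.1.2 p.2⟩

/-- Clauses (c): `e(x,y,i) → e(x,y,ℓ′,i)` for `(x,y) ∈ E`, `ℓ′ ∈ L′_y`, `i ∈ [d]`. -/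
def clC (I : LabelCover X Y A B) (d : ℕ) : Finset (Clause (PV X Y A B)) :=
  ((I.E ×ˢ (Finset.univ : Finset B)) ×ˢ Finset.Icc 1 d).image fun p =>
    ⟨{PV.el p.1.1.1 p.1.1.2 p.1.2 p.2}, {PV.e p.1.1.1 p.1.1.2 p.2}⟩

/-- The common body of the clauses (d): all variables `e(x,y,i)`, `(x,y) ∈ E`, `i ∈ [d]`. -/
def bigBody (I : LabelCover X Y A B) (d : ℕ) : Finset (PV X Y A B) :=
  (I.E ×ˢ Finset.Icc 1 d).image fun p => PV.e p.1.1 p.1.2 p.2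

/-- Clauses (d): `⋀_{i ∈ [d]} ⋀_{(x,y) ∈ E} e(x,y,i) → u(ℓ)` for `ℓ ∈ L ∪ L′`. -/
def clD (I : LabelCover X Y A B) (d : ℕ) : Finset (Clause (PV X Y A B)) :=
  (Finset.univ : Finset (Lab X Y A B)).image fun ℓ => ⟨{PV.u ℓ}, bigBody I d⟩

/-- Clauses (e): `v(j) → u(ℓ)` for `j ∈ [t]`, `ℓ ∈ L ∪ L′`. -/
def clE (X Y A B : Type*) [Fintype X] [Fintype Y] [Fintype A] [Fintype B]
    [DecidableEq X] [DecidableEq Y] [DecidableEq A] [DecidableEq B]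
    (t : ℕ) : Finset (Clause (PV X Y A B)) :=
  (Finset.Icc 1 t ×ˢ (Finset.univ : Finset (Lab X Y A B))).image fun p =>
    ⟨{PV.u p.2}, {PV.v p.1}⟩

/-- The canonical formula `Ψ`: clauses of types (a)–(d). -/
def PsiCNF (I : LabelCover X Y A B) (d : ℕ) : Finset (Clause (PV X Y A B)) :=
  clA I d ∪ clB I d ∪ clC I d ∪ clD I d

/-- The canonical formula `Φ`: clauses of types (a)–(e). -/
def PhiCNF (I : LabelCover X Y A B) (d t : ℕ) : Finset (Clause (PV X Y A B)) :=
  PsiCNF I d ∪ clE X Y A B t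

/-- The pure Horn function `h` represented by the canonical formula `Φ`. -/
def hFun (I : LabelCover X Y A B) (d t : ℕ) : (PV X Y A B → Bool) → Prop :=
  fun a => evalCNF (PhiCNF I d t) a

/-- The pure Horn function `g` represented by the canonical formula `Ψ`. -/
def gFun (I : LabelCover X Y A B) (d : ℕ) : (PV X Y A B → Bool) → Prop :=
  fun a => evalCNF (PsiCNF I d) a

end Canonical


/-- The `X`-side labeling extracted from a representation `Υ` of `h`:
`f_j(x) = S_j ∩ L_x`, where `S_j` is the set of labels `ℓ` such that the clause
`v(j) → u(ℓ)` belongs to `Υ`. -/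
def fjX {X Y A B : Type*} [Fintype X] [Fintype Y] [Fintype A] [Fintype B]
    [DecidableEq X] [DecidableEq Y] [DecidableEq A] [DecidableEq B]
    (Υ : Finset (Clause (PV X Y A B))) (j : ℕ) (x : X) : Finset A :=
  Finset.univ.filter fun a =>
    (⟨{PV.u (Sum.inl (x, a))}, {PV.v j}⟩ : Clause (PV X Y A B)) ∈ Υ

/-- The `Y`-side labeling extracted from a representation `Υ` of `h`:
`f_j(y) = S_j ∩ L′_y`, where `S_j` is the set of labels `ℓ` such that the clause
`v(j) → u(ℓ)` belongs to `Υ`. -/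
def fjY {X Y A B : Type*} [Fintype X] [Fintype Y] [Fintype A] [Fintype B]
    [DecidableEq X] [DecidableEq Y] [DecidableEq A] [DecidableEq B]
    (Υ : Finset (Clause (PV X Y A B))) (j : ℕ) (y : Y) : Finset B :=
  Finset.univ.filter fun b =>
    (⟨{PV.u (Sum.inr (y, b))}, {PV.v j}⟩ : Clause (PV X Y A B)) ∈ Υ


/-!
Forward chaining computes the implicates of a pure Horn function: `S → w` is an implicate of `h`
iff `w` lies in the forward-chaining closure of `S` under `Φ`, or under any other pure Horn
representation `Υ` of `h`. Primality forces every clause of `Υ` whose body contains `v(j)` to be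
`v(j) → w`. Replacing these clauses by `v(j) → u(ℓ)`, for the labels `ℓ` of an optimal tight
total-cover, again represents `h`; so by minimality of `Υ` there are at most `r κ(L) + s < d` of
them, and some copy `i ∈ [d]` of the gadget (a)–(c) contains none of their heads. Since `v(j)`
still derives `e(x,y,i)`, and in copy `i` this can only go through the labels of `S_j`, every
`y` has a label in `f_j(y)` supported on all of its edges by `f_j`. So `f_j` contains a tight
total-cover, and counting the clauses once more shows that `f_j` is one, of minimum cost.
-/

section Horn

variable {V : Type*} {Φ Υ : Finset (Clause V)} {Q Q' T : Set V} {C : Clause V} {a : V → Bool}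
  {w z : V}

theorem Clause.eval_iff_of_pos_eq (hC : C.pos = {w}) :
    C.eval a ↔ ((∀ z ∈ C.neg, a z = true) → a w = true) := by
  simp only [Clause.eval, hC, Finset.mem_singleton, exists_eq_left]
  by_cases hw : a w = true <;> simp [hw]

theorem Represents.implicate {h : (V → Bool) → Prop} (hrep : Represents Φ h) (hC : C ∈ Φ) :
    Implicate h C :=
  fun a hne ha => hne ((hrep a).2 ha C hC)

def FCClosed (Φ : Finset (Clause V)) (T : Set V) : Prop :=
  ∀ C ∈ Φ, ∀ v : V, C.pos = {v} → ↑C.neg ⊆ T → v ∈ T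

theorem fcClosure_subset (hQ : Q ⊆ T) (hT : FCClosed Φ T) : fcClosure Φ Q ⊆ T :=
  Set.sInter_subset_of_mem ⟨hQ, hT⟩

theorem subset_fcClosure : Q ⊆ fcClosure Φ Q :=
  Set.subset_sInter fun _ hT => hT.1

theorem fcClosed_fcClosure : FCClosed Φ (fcClosure Φ Q) :=
  fun C hC v hv hneg => Set.mem_sInter.2 fun _ hT =>
    hT.2 C hC v hv (hneg.trans (Set.sInter_subset_of_mem hT))

theorem fcClosure_mono (hQ : Q ⊆ Q') : fcClosure Φ Q ⊆ fcClosure Φ Q' :=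
  fcClosure_subset (hQ.trans subset_fcClosure) fcClosed_fcClosure

theorem fcClosure_subset_union_heads :
    fcClosure Φ Q ⊆ Q ∪ {w | ∃ C ∈ Φ, C.pos = {w}} :=
  fcClosure_subset Set.subset_union_left fun C hC _ hv _ => Or.inr ⟨C, hC, hv⟩

theorem fcClosed_of_evalCNF (ha : evalCNF Φ a) : FCClosed Φ {w | a w = true} :=
  fun C hC _ hv hneg => (Clause.eval_iff_of_pos_eq hv).1 (ha C hC) fun _ hz => hneg hz

theorem fcClosure_subset_of_evalCNF (ha : evalCNF Φ a) (hQ : ∀ q ∈ Q, a q = true) :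
    fcClosure Φ Q ⊆ {w | a w = true} :=
  fcClosure_subset hQ (fcClosed_of_evalCNF ha)

theorem evalCNF_of_fcClosed (hΦ : ∀ C ∈ Φ, C.IsPureHorn) (h : FCClosed Φ {w | a w = true}) :
    evalCNF Φ a := fun C hC => by
  obtain ⟨v, hv⟩ := hΦ C hC
  exact (Clause.eval_iff_of_pos_eq hv).2 fun hneg => h C hC v hv hneg

theorem fcClosed_iff_evalCNF (hΦ : ∀ C ∈ Φ, C.IsPureHorn) :
    FCClosed Φ {w | a w = true} ↔ evalCNF Φ a :=
  ⟨evalCNF_of_fcClosed hΦ, fcClosed_of_evalCNF⟩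

theorem mem_fcClosure_iff (hΦ : ∀ C ∈ Φ, C.IsPureHorn) :
    w ∈ fcClosure Φ Q ↔ ∀ a, evalCNF Φ a → (∀ q ∈ Q, a q = true) → a w = true := by
  classical
  refine ⟨fun hw a ha hQ => fcClosure_subset_of_evalCNF ha hQ hw, fun h => ?_⟩
  have hχ : evalCNF Φ fun v => decide (v ∈ fcClosure Φ Q) :=
    evalCNF_of_fcClosed hΦ (by simpa using fcClosed_fcClosure)
  simpa using h _ hχ fun q hq => by simpa using subset_fcClosure hq

theorem implicate_evalCNF_iff (hΦ : ∀ C ∈ Φ, C.IsPureHorn) (hC : C.pos = {w}) :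
    Implicate (evalCNF Φ) C ↔ w ∈ fcClosure Φ C.neg := by
  simp only [Implicate, not_imp_not, Clause.eval_iff_of_pos_eq hC, mem_fcClosure_iff hΦ,
    Finset.mem_coe]

theorem fcClosed_iff_of_represents (hΥ : ∀ C ∈ Υ, C.IsPureHorn) (hΦ : ∀ C ∈ Φ, C.IsPureHorn)
    (hrep : Represents Υ (evalCNF Φ)) : FCClosed Υ T ↔ FCClosed Φ T := by
  classical
  have hT : T = {w | decide (w ∈ T) = true} := by simp
  rw [hT, fcClosed_iff_evalCNF hΥ, fcClosed_iff_evalCNF hΦ, hrep]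

theorem fcClosure_eq_of_represents (hΥ : ∀ C ∈ Υ, C.IsPureHorn) (hΦ : ∀ C ∈ Φ, C.IsPureHorn)
    (hrep : Represents Υ (evalCNF Φ)) : fcClosure Υ Q = fcClosure Φ Q := by
  unfold fcClosure
  congr 1
  ext T
  exact and_congr_right fun _ => fcClosed_iff_of_represents hΥ hΦ hrep

theorem fcClosure_subset_fcClosure_filter [DecidableEq V] (hzQ : z ∉ Q)
    (hz : ∀ C ∈ Φ, C.pos ≠ {z}) :
    fcClosure Φ Q ⊆ fcClosure (Φ.filter fun C => z ∉ C.neg) Q := by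
  refine fcClosure_subset subset_fcClosure fun C hC v hv hneg => ?_
  by_cases hzC : z ∈ C.neg
  · rcases fcClosure_subset_union_heads (hneg hzC) with hzQ' | ⟨C', hC', hC'z⟩
    · exact absurd hzQ' hzQ
    · exact absurd hC'z (hz C' (Finset.mem_filter.1 hC').1)
  · exact fcClosed_fcClosure C (Finset.mem_filter.2 ⟨hC, hzC⟩) v hv hneg

theorem fcClosed_union [DecidableEq V] {Φ' : Finset (Clause V)} :
    FCClosed (Φ ∪ Φ') T ↔ FCClosed Φ T ∧ FCClosed Φ' T := by
  simp only [FCClosed, Finset.mem_union, or_imp, forall_and]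

theorem fcClosed_biUnion {ι : Type*} [DecidableEq V] {s : Finset ι}
    {Φ : ι → Finset (Clause V)} : FCClosed (s.biUnion Φ) T ↔ ∀ i ∈ s, FCClosed (Φ i) T := by
  simp only [FCClosed, Finset.mem_biUnion, forall_exists_index, and_imp]
  exact ⟨fun h i hi C hC => h C i hi hC, fun h C i hi hC => h i hi C hC⟩

theorem fcClosed_image {ι : Type*} [DecidableEq V] {s : Finset ι} {head : ι → V}
    {body : ι → Finset V} :
    FCClosed (s.image fun i => ⟨{head i}, body i⟩) T ↔ ∀ i ∈ s, ↑(body i) ⊆ T → head i ∈ T := by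
  simp only [FCClosed, Finset.forall_mem_image, Finset.singleton_inj, forall_eq']

end Horn

namespace LabelCover

variable {X Y A B : Type*} {I : LabelCover X Y A B}

theorem exists_tight_subcover {f : X → Finset A} {g : Y → Finset B}
    (h : ∀ y, ∃ b ∈ g y, ∀ x, (x, y) ∈ I.E → ∃ a ∈ f x, (a, b) ∈ I.cst (x, y)) :
    ∃ g' : Y → Finset B, I.IsTotalCover f g' ∧ Tight g' ∧ ∀ y, g' y ⊆ g y := by
  choose b hb hcov using h
  refine ⟨fun y => {b y}, ⟨fun y => Finset.singleton_nonempty _, fun e he b' hb' => ?_⟩,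
    fun y => Finset.card_singleton _, fun y => Finset.singleton_subset_iff.2 (hb y)⟩
  rw [Finset.mem_singleton.1 hb']
  exact hcov e.2 e.1 he

theorem IsTotalCover.exists_tight {f : X → Finset A} {g : Y → Finset B}
    (h : I.IsTotalCover f g) : ∃ g' : Y → Finset B, I.IsTotalCover f g' ∧ Tight g' :=
  (exists_tight_subcover fun y =>
    (h.1 y).elim fun b hb => ⟨b, hb, fun x hx => h.2 (x, y) hx b hb⟩).imp fun _ h => ⟨h.1, h.2.1⟩

theorem exists_tight_minimal [Fintype X] (hfeas : ∃ f g, I.IsTotalCover f g) :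
    ∃ f g, I.IsTotalCover f g ∧ Tight g ∧
      ∀ f' g', I.IsTotalCover f' g' → ∑ x, (f x).card ≤ ∑ x, (f' x).card := by
  classical
  obtain ⟨f, g, hcov⟩ := hfeas
  have hex : ∃ n, ∃ f g, I.IsTotalCover f g ∧ ∑ x, (f x).card = n := ⟨_, f, g, hcov, rfl⟩
  obtain ⟨f₀, g₀, hcov₀, hf₀⟩ := Nat.find_spec hex
  obtain ⟨g₁, hcov₁, htight⟩ := hcov₀.exists_tight
  exact ⟨f₀, g₁, hcov₁, htight, fun f' g' h' => hf₀ ▸ Nat.find_min' hex ⟨f', g', h', rfl⟩⟩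

end LabelCover

theorem eq_of_forall_subset_of_sum_card_le {ι α : Type*} [Fintype ι] {g g' : ι → Finset α}
    (hsub : ∀ i, g i ⊆ g' i) (hcard : ∑ i, (g' i).card ≤ ∑ i, (g i).card) : g' = g := by
  have hle : ∀ i ∈ univ, (g i).card ≤ (g' i).card := fun i _ => Finset.card_le_card (hsub i)
  funext i
  refine (Finset.eq_of_subset_of_card_le (hsub i) ?_).symm
  exact ((Finset.sum_eq_sum_iff_of_le hle).1 (le_antisymm (Finset.sum_le_sum hle) hcard) i
    (Finset.mem_univ i)).ge

theorem lcCost_le_lcCost {X A A' : Type*} [Fintype X] {f : X → Finset A} {f' : X → Finset A'}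
    (h : ∑ x, (f x).card ≤ ∑ x, (f' x).card) : lcCost f ≤ lcCost f' :=
  div_le_div_of_nonneg_right (by exact_mod_cast h) (Nat.cast_nonneg _)

def labels {X Y A B : Type*} [Fintype X] [Fintype Y] [Fintype A] [Fintype B]
    [DecidableEq A] [DecidableEq B]
    (f : X → Finset A) (g : Y → Finset B) : Finset (Lab X Y A B) :=
  (univ.filter fun p : X × A => p.2 ∈ f p.1).disjSum (univ.filter fun p : Y × B => p.2 ∈ g p.1)

theorem card_filter_snd_mem {α β : Type*} [Fintype α] [Fintype β] [DecidableEq β]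
    (h : α → Finset β) : (univ.filter fun p : α × β => p.2 ∈ h p.1).card = ∑ x, (h x).card := by
  rw [Finset.card_filter, Fintype.sum_prod_type]
  simp

section Counting

variable {X Y A B : Type*} [Fintype X] [Fintype Y] [Fintype A] [Fintype B]
  [DecidableEq A] [DecidableEq B]

@[simp]
theorem inl_mem_labels {f : X → Finset A} {g : Y → Finset B} {x : X} {a : A} :
    Sum.inl (x, a) ∈ labels f g ↔ a ∈ f x := by
  simp [labels]

@[simp]
theorem inr_mem_labels {f : X → Finset A} {g : Y → Finset B} {y : Y} {b : B} :
    Sum.inr (y, b) ∈ labels f g ↔ b ∈ g y := by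
  simp [labels]

theorem card_labels (f : X → Finset A) (g : Y → Finset B) :
    (labels f g).card = ∑ x, (f x).card + ∑ y, (g y).card := by
  rw [labels, Finset.card_disjSum, card_filter_snd_mem, card_filter_snd_mem]

theorem card_labels_le (f : X → Finset A) (g : Y → Finset B) :
    (labels f g).card ≤ Fintype.card X * Fintype.card A + Fintype.card Y * Fintype.card B := by
  simpa using Finset.card_le_univ (labels f g)

end Counting

theorem mem_Nbr {X Y A B : Type*} [Fintype X] [DecidableEq X] [DecidableEq Y]
    {I : LabelCover X Y A B} {y : Y} {z : X} : z ∈ Nbr I y ↔ (z, y) ∈ I.E := by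
  simp [Nbr]

section Canonical

variable {X Y A B : Type*} [DecidableEq X] [DecidableEq Y] [DecidableEq A] [DecidableEq B]
  {I : LabelCover X Y A B} {d t : ℕ} {T : Set (PV X Y A B)}

theorem fcClosed_clA_iff : FCClosed (clA I d) T ↔
    ∀ x y i, (x, y) ∈ I.E → i ∈ Icc 1 d → ∀ a b, (a, b) ∈ I.cst (x, y) →
      PV.u (.inl (x, a)) ∈ T → PV.u (.inr (y, b)) ∈ T → PV.el x y b i ∈ T := by
  simp only [clA, fcClosed_biUnion, fcClosed_image, Finset.mem_product, Finset.coe_insert,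
    Finset.coe_singleton, Set.insert_subset_iff, Set.singleton_subset_iff, and_imp, Prod.forall]

theorem fcClosed_clC_iff [Fintype B] : FCClosed (clC I d) T ↔
    ∀ x y b i, (x, y) ∈ I.E → i ∈ Icc 1 d → PV.e x y i ∈ T → PV.el x y b i ∈ T := by
  simp only [clC, fcClosed_image, Finset.mem_product, Finset.mem_univ, and_true,
    Finset.coe_singleton, Set.singleton_subset_iff, and_imp, Prod.forall]

theorem fcClosed_clB_iff [Fintype X] [Fintype B] : FCClosed (clB I d) T ↔
    ∀ x y b i, (x, y) ∈ I.E → i ∈ Icc 1 d → (∀ z ∈ Nbr I y, PV.el z y b i ∈ T) →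
      PV.e x y i ∈ T := by
  simp only [clB, fcClosed_image, Finset.mem_product, Finset.mem_univ, and_true,
    Finset.coe_image, Set.subset_def, Set.forall_mem_image, Finset.mem_coe, and_imp, Prod.forall]

variable [Fintype X] [Fintype Y] [Fintype A] [Fintype B]

theorem fcClosed_clD_iff : FCClosed (clD I d) T ↔
    ((∀ x y i, (x, y) ∈ I.E → i ∈ Icc 1 d → PV.e x y i ∈ T) → ∀ ℓ, PV.u ℓ ∈ T) := by
  simp only [clD, bigBody, fcClosed_image, Finset.mem_univ, true_imp_iff, Finset.coe_image,
    Set.image_subset_iff, Finset.coe_product, Set.prod_subset_iff, Finset.mem_coe,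
    Set.mem_preimage, imp_forall_iff, Prod.forall]

theorem fcClosed_clE_iff : FCClosed (clE X Y A B t) T ↔
    ∀ j ℓ, j ∈ Icc 1 t → PV.v j ∈ T → PV.u ℓ ∈ T := by
  simp only [clE, fcClosed_image, Finset.mem_product, Finset.mem_univ, and_true,
    Finset.coe_singleton, Set.singleton_subset_iff, Prod.forall]

theorem fcClosed_PhiCNF_iff : FCClosed (PhiCNF I d t) T ↔
    (∀ x y i, (x, y) ∈ I.E → i ∈ Icc 1 d → ∀ a b, (a, b) ∈ I.cst (x, y) →
      PV.u (.inl (x, a)) ∈ T → PV.u (.inr (y, b)) ∈ T → PV.el x y b i ∈ T) ∧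
    (∀ x y b i, (x, y) ∈ I.E → i ∈ Icc 1 d → (∀ z ∈ Nbr I y, PV.el z y b i ∈ T) →
      PV.e x y i ∈ T) ∧
    (∀ x y b i, (x, y) ∈ I.E → i ∈ Icc 1 d → PV.e x y i ∈ T → PV.el x y b i ∈ T) ∧
    ((∀ x y i, (x, y) ∈ I.E → i ∈ Icc 1 d → PV.e x y i ∈ T) → ∀ ℓ, PV.u ℓ ∈ T) ∧
    (∀ j ℓ, j ∈ Icc 1 t → PV.v j ∈ T → PV.u ℓ ∈ T) := by
  simp only [PhiCNF, PsiCNF, fcClosed_union, fcClosed_clA_iff, fcClosed_clB_iff, fcClosed_clC_iff,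
    fcClosed_clD_iff, fcClosed_clE_iff, and_assoc]

theorem isPureHorn_of_mem_PhiCNF : ∀ C ∈ PhiCNF I d t, C.IsPureHorn := by
  intro C hC
  simp only [PhiCNF, PsiCNF, Finset.mem_union, clA, clB, clC, clD, clE, Finset.mem_biUnion,
    Finset.mem_image] at hC
  aesop (add norm unfold Clause.IsPureHorn)

/-- The variables heading some clause of `Φ`. -/
def IsPhiHead (I : LabelCover X Y A B) (d : ℕ) : PV X Y A B → Prop
  | .u _ => True
  | .e x y i | .el x y _ i => (x, y) ∈ I.E ∧ i ∈ Icc 1 d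
  | .v _ => False

theorem fcClosure_PhiCNF_subset {Q : Set (PV X Y A B)} :
    fcClosure (PhiCNF I d t) Q ⊆ Q ∪ {w | IsPhiHead I d w} := by
  refine fcClosure_subset Set.subset_union_left (fcClosed_PhiCNF_iff.2 ?_)
  refine ⟨?_, ?_, ?_, ?_, ?_⟩ <;> intros <;> right <;> trivial

theorem fcClosed_insert_v {S : Set (PV X Y A B)} (hS : FCClosed (PhiCNF I d t) S) {k : ℕ}
    (hk : k ∉ Icc 1 t) : FCClosed (PhiCNF I d t) (insert (PV.v k) S) := by
  obtain ⟨hA, hB, hC, hD, hE⟩ := fcClosed_PhiCNF_iff.1 hS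
  simp only [fcClosed_PhiCNF_iff, Set.mem_insert_iff, reduceCtorEq, false_or, PV.v.injEq]
  exact ⟨hA, hB, hC, hD, fun j ℓ hj hv => hE j ℓ hj (hv.resolve_left (by rintro rfl; exact hk hj))⟩

theorem mem_of_fcClosed_PhiCNF (hT : FCClosed (PhiCNF I d t) T) {f : X → Finset A}
    {g : Y → Finset B} (hcov : I.IsTotalCover f g)
    (hf : ∀ x, ∀ a ∈ f x, PV.u (.inl (x, a)) ∈ T) (hg : ∀ y, ∀ b ∈ g y, PV.u (.inr (y, b)) ∈ T)
    {w : PV X Y A B} (hw : IsPhiHead I d w) : w ∈ T := by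
  obtain ⟨hA, hB, hC, hD, -⟩ := fcClosed_PhiCNF_iff.1 hT
  have he : ∀ x y i, (x, y) ∈ I.E → i ∈ Icc 1 d → PV.e x y i ∈ T := by
    intro x y i hxy hi
    obtain ⟨b, hb⟩ := hcov.1 y
    refine hB x y b i hxy hi fun z hz => ?_
    obtain ⟨a, ha, hab⟩ := hcov.2 (z, y) (mem_Nbr.1 hz) b hb
    exact hA z y i (mem_Nbr.1 hz) hi a b hab (hf z a ha) (hg y b hb)
  match w, hw with
  | .u ℓ, _ => exact hD he ℓ
  | .e x y i, ⟨hxy, hi⟩ => exact he x y i hxy hi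
  | .el x y b i, ⟨hxy, hi⟩ => exact hC x y b i hxy hi (he x y i hxy hi)

theorem mem_fcClosure_v (hfeas : ∃ f g, I.IsTotalCover f g) {j : ℕ} (hj : j ∈ Icc 1 t)
    {w : PV X Y A B} (hw : IsPhiHead I d w) : w ∈ fcClosure (PhiCNF I d t) {PV.v j} := by
  obtain ⟨f, g, hcov⟩ := hfeas
  have hu : ∀ ℓ, PV.u ℓ ∈ fcClosure (PhiCNF I d t) {PV.v j} := fun ℓ =>
    (fcClosed_PhiCNF_iff.1 fcClosed_fcClosure).2.2.2.2 j ℓ hj (subset_fcClosure rfl)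
  exact mem_of_fcClosed_PhiCNF fcClosed_fcClosure hcov (fun _ _ _ => hu _) (fun _ _ _ => hu _) hw

end Canonical

/-- The copy `i ∈ [d]` that `e(x,y,i)` and `e(x,y,ℓ′,i)` belong to; `0 ∉ [d]` for the other
variables. -/
def PV.layer {X Y A B : Type*} : PV X Y A B → ℕ
  | .e _ _ i | .el _ _ _ i => i
  | _ => 0

theorem exists_layer_avoided {X Y A B : Type*} [DecidableEq X] [DecidableEq Y] [DecidableEq A]
    [DecidableEq B] {Υ : Finset (Clause (PV X Y A B))} {j d : ℕ} (hPH : IsPureHornCNF Υ)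
    (hlt : (Υ.filter fun C => PV.v j ∈ C.neg).card < d) :
    ∃ i ∈ Icc 1 d, ∀ C ∈ Υ, PV.v j ∈ C.neg → ∀ w ∈ C.pos, w.layer ≠ i := by
  set Υj := Υ.filter fun C => PV.v j ∈ C.neg
  have hcard : ((Υj.biUnion Clause.pos).image PV.layer).card < (Icc 1 d).card := by
    calc _ ≤ (Υj.biUnion Clause.pos).card := Finset.card_image_le
      _ ≤ ∑ C ∈ Υj, C.pos.card := Finset.card_biUnion_le
      _ = Υj.card * 1 := Finset.sum_const_nat fun C hC => by
          obtain ⟨-, w, hw⟩ := hPH C (Finset.mem_filter.1 hC).1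
          simp [hw]
      _ < (Icc 1 d).card := by simpa using hlt
  obtain ⟨i, hi, hnot⟩ := Finset.exists_mem_notMem_of_card_lt_card hcard
  exact ⟨i, hi, fun C hC hv w hw h => hnot (Finset.mem_image.2
    ⟨w, Finset.mem_biUnion.2 ⟨C, Finset.mem_filter.2 ⟨hC, hv⟩, hw⟩, h⟩)⟩

section Representation

variable {X Y A B : Type*} [Fintype X] [Fintype Y] [Fintype A] [Fintype B]
  [DecidableEq X] [DecidableEq Y] [DecidableEq A] [DecidableEq B]
  {I : LabelCover X Y A B} {d t : ℕ} {Υ : Finset (Clause (PV X Y A B))}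
  {C : Clause (PV X Y A B)} {w : PV X Y A B} {j : ℕ}

theorem mem_fjX {x : X} {a : A} :
    a ∈ fjX Υ j x ↔ (⟨{PV.u (.inl (x, a))}, {PV.v j}⟩ : Clause (PV X Y A B)) ∈ Υ := by
  simp [fjX]

theorem mem_fjY {y : Y} {b : B} :
    b ∈ fjY Υ j y ↔ (⟨{PV.u (.inr (y, b))}, {PV.v j}⟩ : Clause (PV X Y A B)) ∈ Υ := by
  simp [fjY]

theorem isPhiHead_of_mem (hPH : IsPureHornCNF Υ) (hrep : Represents Υ (hFun I d t))
    (hC : C ∈ Υ) (hw : C.pos = {w}) : IsPhiHead I d w := by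
  have hwC : w ∈ fcClosure (PhiCNF I d t) C.neg :=
    (implicate_evalCNF_iff isPureHorn_of_mem_PhiCNF hw).1 (hrep.implicate hC)
  rcases fcClosure_PhiCNF_subset hwC with hneg | hhead
  · exact absurd hneg (Finset.disjoint_left.1 (hPH C hC).1 (hw ▸ Finset.mem_singleton_self w))
  · exact hhead

theorem neg_eq_singleton_v (hfeas : ∃ f g, I.IsTotalCover f g) (hPH : IsPureHornCNF Υ)
    (hprime : ∀ C ∈ Υ, PrimeImplicate (hFun I d t) C) (hrep : Represents Υ (hFun I d t))
    {k : ℕ} (hC : C ∈ Υ) (hk : PV.v k ∈ C.neg) :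
    k ∈ Icc 1 t ∧ C.neg = {PV.v k} := by
  obtain ⟨-, w, hw⟩ := hPH C hC
  have hwh := isPhiHead_of_mem hPH hrep hC hw
  have hnot : ∀ z ∈ C.neg, w ∉ fcClosure (PhiCNF I d t) ↑(C.neg.erase z) := fun z hz h =>
    (hprime C hC).2.2.2 z hz
      ((implicate_evalCNF_iff (C := ⟨C.pos, C.neg.erase z⟩) isPureHorn_of_mem_PhiCNF hw).2 h)
  have hkt : k ∈ Icc 1 t := by
    by_contra hkt
    have hwC : w ∈ fcClosure (PhiCNF I d t) C.neg :=
      (implicate_evalCNF_iff isPureHorn_of_mem_PhiCNF hw).1 (hprime C hC).2.1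
    have hsub : ↑C.neg ⊆ insert (PV.v k) (fcClosure (PhiCNF I d t) ↑(C.neg.erase (PV.v k))) :=
      fun z hz => by
        by_cases hzk : z = PV.v k
        · exact Or.inl hzk
        · exact Or.inr (subset_fcClosure (Finset.mem_erase.2 ⟨hzk, hz⟩))
    rcases fcClosure_subset hsub (fcClosed_insert_v fcClosed_fcClosure hkt) hwC with rfl | h
    · exact hwh
    · exact hnot _ hk h
  refine ⟨hkt, Finset.eq_singleton_iff_unique_mem.2 ⟨hk, fun z hz => ?_⟩⟩
  by_contra hzk
  refine hnot z hz (fcClosure_mono ?_ (mem_fcClosure_v hfeas hkt hwh))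
  exact Set.singleton_subset_iff.2 (Finset.mem_erase.2 ⟨fun h => hzk h.symm, hk⟩)

/-- Every clause of `Υ` using `v j` is some `v j → w`, so `fcClosure Υ {v j}` adds to the closure
of these heads at most `v j` itself. -/
theorem mem_fcClosure_heads_v (hfeas : ∃ f g, I.IsTotalCover f g) (hPH : IsPureHornCNF Υ)
    (hprime : ∀ C ∈ Υ, PrimeImplicate (hFun I d t) C) (hrep : Represents Υ (hFun I d t))
    (hj : j ∈ Icc 1 t) (hw : IsPhiHead I d w) :
    w ∈ fcClosure (PhiCNF I d t) {w' | (⟨{w'}, {PV.v j}⟩ : Clause (PV X Y A B)) ∈ Υ} := by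
  set P := fcClosure (PhiCNF I d t) {w' | (⟨{w'}, {PV.v j}⟩ : Clause (PV X Y A B)) ∈ Υ}
  have hΥ : ∀ C ∈ Υ, C.IsPureHorn := fun C hC => (hPH C hC).2
  have hsub : fcClosure Υ {PV.v j} ⊆ insert (PV.v j) P := by
    refine fcClosure_subset (by simp) fun C hC v hv hneg => Or.inr ?_
    by_cases hvj : PV.v j ∈ C.neg
    · have hCj := (neg_eq_singleton_v hfeas hPH hprime hrep hC hvj).2
      refine subset_fcClosure (?_ : (⟨{v}, {PV.v j}⟩ : Clause (PV X Y A B)) ∈ Υ)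
      rwa [← hv, ← hCj]
    · refine (fcClosed_iff_of_represents hΥ isPureHorn_of_mem_PhiCNF hrep).2 fcClosed_fcClosure
        C hC v hv fun z hz => (hneg hz).resolve_left ?_
      rintro rfl
      exact hvj hz
  have hwΥ := (fcClosure_eq_of_represents hΥ isPureHorn_of_mem_PhiCNF hrep).symm ▸
    mem_fcClosure_v hfeas hj hw
  exact (hsub hwΥ).resolve_left (by rintro rfl; exact hw)

theorem exists_label_of_layer_avoided (hfeas : ∃ f g, I.IsTotalCover f g)
    (hnoIsoY : ∀ y : Y, ∃ x, (x, y) ∈ I.E) (hPH : IsPureHornCNF Υ)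
    (hprime : ∀ C ∈ Υ, PrimeImplicate (hFun I d t) C) (hrep : Represents Υ (hFun I d t))
    (hj : j ∈ Icc 1 t) {i : ℕ} (hi : i ∈ Icc 1 d)
    (havoid : ∀ C ∈ Υ, PV.v j ∈ C.neg → ∀ w ∈ C.pos, w.layer ≠ i) (y : Y) :
    ∃ b ∈ fjY Υ j y, ∀ x, (x, y) ∈ I.E → ∃ a ∈ fjX Υ j x, (a, b) ∈ I.cst (x, y) := by
  by_contra! hbad
  obtain ⟨x₀, hx₀⟩ := hnoIsoY y
  -- `T` is closed and contains the `v j`-heads, but misses `e(x₀,y,i)`.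
  let T : Set (PV X Y A B) := {w | match w with
    | .u ℓ => (⟨{PV.u ℓ}, {PV.v j}⟩ : Clause (PV X Y A B)) ∈ Υ
    | .e _ y' i' => (y', i') ≠ (y, i)
    | .el z y' b i' => (y', i') = (y, i) → b ∈ fjY Υ j y ∧ ∃ a ∈ fjX Υ j z, (a, b) ∈ I.cst (z, y)
    | .v _ => False}
  have hT : FCClosed (PhiCNF I d t) T := by
    refine fcClosed_PhiCNF_iff.2 ⟨?_, ?_, ?_, ?_, ?_⟩
    · rintro x y' i' - - a b hab hxa hyb ⟨⟩
      exact ⟨mem_fjY.2 hyb, a, mem_fjX.2 hxa, hab⟩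
    · rintro x y' b i' hxy - hbody ⟨⟩
      obtain ⟨z, hz, hzb⟩ := hbad b (hbody x (mem_Nbr.2 hxy) rfl).1
      obtain ⟨a, ha, hab⟩ := (hbody z (mem_Nbr.2 hz) rfl).2
      exact hzb a ha hab
    · exact fun x y' b i' _ _ he h => absurd h he
    · exact fun he => absurd rfl (he x₀ y i hx₀ hi)
    · exact fun _ _ _ hv => hv.elim
  have hH : {w | (⟨{w}, {PV.v j}⟩ : Clause (PV X Y A B)) ∈ Υ} ⊆ T := by
    intro w hw
    have hl := havoid _ hw (Finset.mem_singleton_self _) w (Finset.mem_singleton_self _)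
    match w, isPhiHead_of_mem hPH hrep hw rfl with
    | .u _, _ => exact hw
    | .e _ _ _, _ => exact fun h => hl (Prod.ext_iff.1 h).2
    | .el _ _ _ _, _ => exact fun h => absurd (Prod.ext_iff.1 h).2 hl
  exact fcClosure_subset hH hT
    (mem_fcClosure_heads_v (w := PV.e x₀ y i) hfeas hPH hprime hrep hj ⟨hx₀, hi⟩) rfl

end Representation

section Optimality

variable {X Y A B : Type*} [Fintype X] [Fintype Y] [Fintype A] [Fintype B]
  [DecidableEq X] [DecidableEq Y] [DecidableEq A] [DecidableEq B]
  {I : LabelCover X Y A B} {d t : ℕ} {Υ : Finset (Clause (PV X Y A B))} {j : ℕ}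

theorem mem_PhiCNF_of_mem_Icc (hj : j ∈ Icc 1 t) (ℓ : Lab X Y A B) :
    (⟨{PV.u ℓ}, {PV.v j}⟩ : Clause (PV X Y A B)) ∈ PhiCNF I d t := by
  simp only [PhiCNF, clE, Finset.mem_union, Finset.mem_image, Finset.mem_product, Finset.mem_univ]
  exact Or.inr ⟨(j, ℓ), ⟨hj, trivial⟩, rfl⟩

theorem card_labels_fj_le :
    (labels (fjX Υ j) (fjY Υ j)).card ≤ (Υ.filter fun C => PV.v j ∈ C.neg).card := by
  refine Finset.card_le_card_of_injOn (fun ℓ => ⟨{PV.u ℓ}, {PV.v j}⟩) ?_ ?_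
  · rintro (⟨x, a⟩ | ⟨y, b⟩) h
    · exact Finset.mem_filter.2 ⟨mem_fjX.1 (inl_mem_labels.1 h), Finset.mem_singleton_self _⟩
    · exact Finset.mem_filter.2 ⟨mem_fjY.1 (inr_mem_labels.1 h), Finset.mem_singleton_self _⟩
  · intro ℓ _ ℓ' _ h
    simpa using h

theorem represents_replace (hPH : IsPureHornCNF Υ) (hrep : Represents Υ (hFun I d t))
    (hj : j ∈ Icc 1 t) {f : X → Finset A} {g : Y → Finset B} (hcov : I.IsTotalCover f g) :
    Represents (Υ.filter (fun C => PV.v j ∉ C.neg) ∪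
      (labels f g).image fun ℓ => ⟨{PV.u ℓ}, {PV.v j}⟩) (hFun I d t) := by
  intro a
  constructor
  · intro ha
    refine (hrep a).1 fun C hC => ?_
    by_cases hvj : PV.v j ∈ C.neg
    · obtain ⟨-, w, hw⟩ := hPH C hC
      refine (Clause.eval_iff_of_pos_eq hw).2 fun hbody => ?_
      have hU : ∀ q ∈ PV.u '' ↑(labels f g), a q = true := by
        rintro _ ⟨ℓ, hℓ, rfl⟩
        refine (Clause.eval_iff_of_pos_eq rfl).1 (ha _ (Finset.mem_union_right _
          (Finset.mem_image_of_mem _ hℓ))) ?_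
        simpa using hbody _ hvj
      have hwΦ : w ∈ fcClosure (PhiCNF I d t) (PV.u '' ↑(labels f g)) :=
        mem_of_fcClosed_PhiCNF fcClosed_fcClosure hcov
          (fun x a ha => subset_fcClosure (Set.mem_image_of_mem _ (inl_mem_labels.2 ha)))
          (fun y b hb => subset_fcClosure (Set.mem_image_of_mem _ (inr_mem_labels.2 hb)))
          (isPhiHead_of_mem hPH hrep hC hw)
      rw [← fcClosure_eq_of_represents (fun C hC => (hPH C hC).2) isPureHorn_of_mem_PhiCNF
        hrep] at hwΦ
      -- `v j` heads no clause, so the dropped clauses never fire from the labels.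
      refine fcClosure_subset_of_evalCNF (fun C hC => ha C (Finset.mem_union_left _ hC)) hU
        (fcClosure_subset_fcClosure_filter ?_ ?_ hwΦ)
      · rintro ⟨ℓ, -, ⟨⟩⟩
      · exact fun C hC hCv => isPhiHead_of_mem hPH hrep hC hCv
    · exact ha C (Finset.mem_union_left _ (Finset.mem_filter.2 ⟨hC, hvj⟩))
  · intro ha C hC
    rcases Finset.mem_union.1 hC with hC | hC
    · exact (hrep a).2 ha C (Finset.mem_filter.1 hC).1
    · obtain ⟨ℓ, -, rfl⟩ := Finset.mem_image.1 hC
      exact ha _ (mem_PhiCNF_of_mem_Icc hj ℓ)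

theorem card_filter_v_mem_neg_le (hPH : IsPureHornCNF Υ) (hrep : Represents Υ (hFun I d t))
    (hmin : ∀ Υ' : Finset (Clause (PV X Y A B)), IsPureHornCNF Υ' →
      Represents Υ' (hFun I d t) → Υ.card ≤ Υ'.card)
    (hj : j ∈ Icc 1 t) {f : X → Finset A} {g : Y → Finset B} (hcov : I.IsTotalCover f g) :
    (Υ.filter fun C => PV.v j ∈ C.neg).card ≤ (labels f g).card := by
  have hPH' : IsPureHornCNF (Υ.filter (fun C => PV.v j ∉ C.neg) ∪
      (labels f g).image fun ℓ => ⟨{PV.u ℓ}, {PV.v j}⟩) := by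
    intro C hC
    rcases Finset.mem_union.1 hC with hC | hC
    · exact hPH C (Finset.mem_filter.1 hC).1
    · obtain ⟨ℓ, -, rfl⟩ := Finset.mem_image.1 hC
      exact ⟨by simp [Clause.IsClause], _, rfl⟩
  have := calc (Υ.filter fun C => PV.v j ∈ C.neg).card + (Υ.filter fun C => PV.v j ∉ C.neg).card
      _ = Υ.card := Finset.card_filter_add_card_filter_not _
      _ ≤ _ := hmin _ hPH' (represents_replace hPH hrep hj hcov)
      _ ≤ _ := Finset.card_union_le _ _
      _ ≤ (Υ.filter fun C => PV.v j ∉ C.neg).card + (labels f g).card := by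
        gcongr
        exact Finset.card_image_le
  omega

end Optimality

theorem fj_is_optimal_tight_totalCover_general
    {X Y A B : Type*} [Fintype X] [Fintype Y] [Fintype A] [Fintype B]
    [DecidableEq X] [DecidableEq Y] [DecidableEq A] [DecidableEq B]
    (I : LabelCover X Y A B) (d t : ℕ)
    (hd : d = 1 + Fintype.card X * Fintype.card A + Fintype.card Y * Fintype.card B)
    (hnoIsoY : ∀ y : Y, ∃ x, (x, y) ∈ I.E)
    (hfeas : ∃ f g, I.IsTotalCover f g)
    (Υ : Finset (Clause (PV X Y A B)))
    (hPH : IsPureHornCNF Υ)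
    (hprime : ∀ C ∈ Υ, PrimeImplicate (hFun I d t) C)
    (hrep : Represents Υ (hFun I d t))
    (hmin : ∀ Υ' : Finset (Clause (PV X Y A B)), IsPureHornCNF Υ' →
      Represents Υ' (hFun I d t) → Υ.card ≤ Υ'.card) :
    ∀ j ∈ Finset.Icc 1 t,
      I.IsTotalCover (fjX Υ j) (fjY Υ j) ∧ LabelCover.Tight (fjY Υ j) ∧
      ∀ (f' : X → Finset A) (g' : Y → Finset B),
        I.IsTotalCover f' g' → lcCost (fjX Υ j) ≤ lcCost f' := by
  intro j hj
  obtain ⟨f₀, g₀, hcov₀, htight₀, hmin₀⟩ := LabelCover.exists_tight_minimal hfeas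
  have hΥj := card_filter_v_mem_neg_le hPH hrep hmin hj hcov₀
  have hlt : (Υ.filter fun C => PV.v j ∈ C.neg).card < d := by
    have := card_labels_le f₀ g₀
    omega
  obtain ⟨i, hi, havoid⟩ := exists_layer_avoided hPH hlt
  obtain ⟨g, hcov, htight, hsub⟩ := LabelCover.exists_tight_subcover
    (exists_label_of_layer_avoided hfeas hnoIsoY hPH hprime hrep hj hi havoid)
  have hcount : ∑ x, (fjX Υ j x).card + ∑ y, (fjY Υ j y).card ≤
      ∑ x, (f₀ x).card + ∑ y, (g₀ y).card := by
    rw [← card_labels, ← card_labels]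
    exact card_labels_fj_le.trans hΥj
  have hf₀ := hmin₀ _ _ hcov
  have hg : ∑ y, (g y).card = ∑ y, (g₀ y).card := by simp [htight _, htight₀ _]
  have hgfj : ∑ y, (g y).card ≤ ∑ y, (fjY Υ j y).card :=
    Finset.sum_le_sum fun y _ => Finset.card_le_card (hsub y)
  have hfjY : fjY Υ j = g := eq_of_forall_subset_of_sum_card_le hsub (by omega)
  have hX : ∑ x, (fjX Υ j x).card ≤ ∑ x, (f₀ x).card := by omega
  rw [hfjY]
  exact ⟨hcov, htight, fun f' g' hcov' => lcCost_le_lcCost (hX.trans (hmin₀ f' g' hcov'))⟩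

/-- With `d = 1 + rλ + sλ′`, if `Υ` is a clause minimum prime pure
Horn CNF representation of the canonical function `h`, then for every `j ∈ [t]` the
labeling `f_j` extracted from `Υ` is a tight total-cover of the (refined) Label Cover
instance of minimum cost: `κ(f_j) = κ(L)`. -/
theorem fj_is_optimal_tight_totalCover
    {X Y A B : Type*} [Fintype X] [Fintype Y] [Fintype A] [Fintype B]
    [DecidableEq X] [DecidableEq Y] [DecidableEq A] [DecidableEq B]
    [Nonempty X] [Nonempty Y]
    (I : LabelCover X Y A B) (d t : ℕ) (ht : 1 ≤ t)
    (hd : d = 1 + Fintype.card X * Fintype.card A + Fintype.card Y * Fintype.card B)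
    (hnoIsoX : ∀ x : X, ∃ y, (x, y) ∈ I.E)
    (hnoIsoY : ∀ y : Y, ∃ x, (x, y) ∈ I.E)
    (hfeas : ∃ f g, I.IsTotalCover f g)
    (Υ : Finset (Clause (PV X Y A B)))
    (hPH : IsPureHornCNF Υ)
    (hprime : ∀ C ∈ Υ, PrimeImplicate (hFun I d t) C)
    (hrep : Represents Υ (hFun I d t))
    (hmin : ∀ Υ' : Finset (Clause (PV X Y A B)), IsPureHornCNF Υ' →
      Represents Υ' (hFun I d t) → Υ.card ≤ Υ'.card) :
    ∀ j ∈ Finset.Icc 1 t,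
      I.IsTotalCover (fjX Υ j) (fjY Υ j) ∧ LabelCover.Tight (fjY Υ j) ∧
      ∀ (f' : X → Finset A) (g' : Y → Finset B),
        I.IsTotalCover f' g' → lcCost (fjX Υ j) ≤ lcCost f' :=
  fj_is_optimal_tight_totalCover_general I d t hd hnoIsoY hfeas Υ hPH hprime hrep hmin
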